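/- Consider the third-order consensus closed-loop matrix A = [[0, I, 0], [0, 0, I], [−a₀L, −a₁L, −a₂L]] with a₀, a₁, a₂ > 0 and L a symmetric Laplacian. The eigenvalues of A restricted to the mode associated with Laplacian eigenvalue λ > 0 are the roots of s³ + a₂λs² + a₁λs + a₀λ = 0, and by the Routh–Hurwitz criterion all roots have negative real part if and only if a₂λ·a₁λ > a₀λ, i.e., λ > a₀/(a₁a₂). Consequently, a necessary condition for asymptotic convergence to consensus is λ₂ > a₀/(a₁a₂). -/

import Mathlib

/-!
Writing an eigenvector of `A` as `(x, s x, s² x)`, the last block row says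
`(a₀ + a₁ s + a₂ s²) L x = -s³ x`, so `x` is an eigenvector of `L` and `s` is a root of one of
the cubics. For the stability threshold, a cubic with positive coefficients has a negative real
root `r` (intermediate value theorem); splitting off `s - r` leaves a real quadratic
`s² + p s + q` with `q > 0`, whose roots lie in the open left half-plane iff `p > 0`, and
`b c - d = p (c + r²)`. Applied to `λ₂`, whose cubic has no root at `0`, this gives the necessary
condition.
-/

open Matrix

/-- Sorted (ascending) eigenvalues of a Hermitian matrix. -/
noncomputable def sortedEig {N : ℕ} {L : Matrix (Fin N) (Fin N) ℝ}
    (hL : L.IsHermitian) : Fin N → ℝ :=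
  hL.eigenvalues ∘ Tuple.sort hL.eigenvalues

/-- The closed-loop matrix A = [[0, I, 0], [0, 0, I], [−a₀L, −a₁L, −a₂L]] of
third-order consensus, indexed by Fin 3 × Fin N. -/
noncomputable def thirdA {N : ℕ} (a₀ a₁ a₂ : ℝ) (L : Matrix (Fin N) (Fin N) ℝ) :
    Matrix (Fin 3 × Fin N) (Fin 3 × Fin N) ℝ :=
  Matrix.of fun p q =>
    if p.1 = 0 ∧ q.1 = 1 then (if p.2 = q.2 then 1 else 0)
    else if p.1 = 1 ∧ q.1 = 2 then (if p.2 = q.2 then 1 else 0)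
    else if p.1 = 2 ∧ q.1 = 0 then -a₀ * L p.2 q.2
    else if p.1 = 2 ∧ q.1 = 1 then -a₁ * L p.2 q.2
    else if p.1 = 2 ∧ q.1 = 2 then -a₂ * L p.2 q.2
    else 0

theorem exists_neg_root_of_cubic {b c d : ℝ} (hb : 0 ≤ b) (hc : 0 ≤ c) (hd : 0 < d) :
    ∃ r < 0, r ^ 3 + b * r ^ 2 + c * r + d = 0 := by
  set M := 1 + b + d
  have hM : 1 ≤ M := by linarith
  have hneg : (-M) ^ 3 + b * (-M) ^ 2 + c * (-M) + d ≤ 0 := by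
    nlinarith [mul_le_mul_of_nonneg_left hM hd.le, mul_nonneg hc (by linarith : (0:ℝ) ≤ M)]
  obtain ⟨r, ⟨-, hr0⟩, hr⟩ := intermediate_value_Icc (by linarith : -M ≤ 0)
    (by fun_prop : Continuous fun x : ℝ ↦ x ^ 3 + b * x ^ 2 + c * x + d).continuousOn
    ⟨hneg, by simpa using hd.le⟩
  refine ⟨r, lt_of_le_of_ne hr0 ?_, hr⟩
  rintro rfl
  simp [hd.ne'] at hr

theorem re_neg_of_quadratic_eq_zero {p q : ℝ} (hp : 0 < p) (hq : 0 < q) {z : ℂ}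
    (hz : z ^ 2 + p * z + q = 0) : z.re < 0 := by
  have hre : z.re ^ 2 - z.im ^ 2 + p * z.re + q = 0 := by
    simpa [pow_two] using congrArg Complex.re hz
  have him : z.im * (2 * z.re + p) = 0 := by
    have := congrArg Complex.im hz
    simp only [pow_two, Complex.add_im, Complex.mul_im, Complex.ofReal_re, Complex.ofReal_im,
      zero_mul, add_zero, Complex.zero_im] at this
    linarith
  rcases mul_eq_zero.mp him with him0 | hsum
  · by_contra! h
    rw [him0] at hre
    nlinarith
  · linarith

theorem pos_of_forall_quadratic_root_re_neg {p q : ℝ}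
    (h : ∀ z : ℂ, z ^ 2 + p * z + q = 0 → z.re < 0) : 0 < p := by
  obtain ⟨δ, hδ⟩ := IsAlgClosed.exists_eq_mul_self ((p : ℂ) ^ 2 / 4 - q)
  -- the two roots `-p/2 ± δ` have real parts summing to `-p`
  have h₁ := h (-p / 2 + δ) (by linear_combination -hδ)
  have h₂ := h (-p / 2 - δ) (by linear_combination -hδ)
  simp only [Complex.add_re, Complex.div_ofNat_re, Complex.neg_re, Complex.ofReal_re,
    Complex.sub_re, sub_neg] at h₁ h₂
  linarith

theorem cubic_roots_re_neg_iff {b c d : ℝ} (hb : 0 < b) (hc : 0 < c) (hd : 0 < d) :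
    (∀ s : ℂ, s ^ 3 + b * s ^ 2 + c * s + d = 0 → s.re < 0) ↔ d < b * c := by
  obtain ⟨r, hr0, hr⟩ := exists_neg_root_of_cubic hb.le hc.le hd
  set p := b + r
  set q := c + r * p
  have hfactor (s : ℂ) : s ^ 3 + b * s ^ 2 + c * s + d = (s - r) * (s ^ 2 + p * s + q) := by
    have hrC : (r : ℂ) ^ 3 + b * r ^ 2 + c * r + d = 0 := by exact_mod_cast hr
    simp only [p, q]
    push_cast
    linear_combination hrC
  have hgap : b * c - d = p * (c + r ^ 2) := by linear_combination -hr
  have hcr : 0 < c + r ^ 2 := by positivity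
  constructor
  · intro h
    have hp : 0 < p :=
      pos_of_forall_quadratic_root_re_neg fun z hz ↦ h z (by rw [hfactor, hz, mul_zero])
    nlinarith
  · intro hdbc s hs
    have hp : 0 < p := by nlinarith
    have hq : 0 < q := by nlinarith
    rcases mul_eq_zero.mp ((hfactor s).symm.trans hs) with h | h
    · simpa [sub_eq_zero.mp h] using hr0
    · exact re_neg_of_quadratic_eq_zero hp hq h

theorem cubic_consensus_roots_re_neg_iff {a₀ a₁ a₂ lam : ℝ} (ha₀ : 0 < a₀) (ha₁ : 0 < a₁)
    (ha₂ : 0 < a₂) (hlam : 0 < lam) :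
    (∀ s : ℂ, s ^ 3 + (a₂ * lam : ℝ) * s ^ 2 + (a₁ * lam : ℝ) * s + (a₀ * lam : ℝ) = 0 →
      s.re < 0) ↔ a₀ / (a₁ * a₂) < lam := by
  rw [cubic_roots_re_neg_iff (by positivity) (by positivity) (by positivity),
    div_lt_iff₀ (by positivity)]
  constructor <;> intro h <;> nlinarith

theorem Matrix.mem_spectrum_iff_exists_mulVec_eq_smul {K n : Type*} [Field K] [Fintype n]
    [DecidableEq n] (M : Matrix n n K) (μ : K) :
    μ ∈ spectrum K M ↔ ∃ v ≠ 0, M *ᵥ v = μ • v := by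
  rw [spectrum.mem_iff, isUnit_iff_isUnit_det, isUnit_iff_ne_zero, not_not,
    ← exists_mulVec_eq_zero_iff, Algebra.algebraMap_eq_smul_one]
  simp only [sub_mulVec, smul_mulVec, one_mulVec, sub_eq_zero, eq_comm]

theorem Matrix.IsHermitian.mem_spectrum_map_ofReal_iff {n : Type*} [Fintype n] [DecidableEq n]
    {L : Matrix n n ℝ} (hL : L.IsHermitian) (μ : ℂ) :
    μ ∈ spectrum ℂ (L.map (Complex.ofReal ·)) ↔ ∃ i, (hL.eigenvalues i : ℂ) = μ := by
  rw [mem_spectrum_iff_isRoot_charpoly, show L.map (Complex.ofReal ·) = L.map Complex.ofRealHom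
    from rfl, charpoly_map, hL.charpoly_eq, Polynomial.map_prod, Polynomial.IsRoot,
    Polynomial.eval_prod, Finset.prod_eq_zero_iff]
  simp [sub_eq_zero, eq_comm (a := μ)]

section
variable {N : ℕ} (a₀ a₁ a₂ : ℝ) (L : Matrix (Fin N) (Fin N) ℝ)

theorem thirdA_map_mulVec_zero (v : Fin 3 × Fin N → ℂ) (n : Fin N) :
    ((thirdA a₀ a₁ a₂ L).map (Complex.ofReal ·) *ᵥ v) (0, n) = v (1, n) := by
  simp [mulVec, dotProduct, Fintype.sum_prod_type, thirdA, apply_ite (Complex.ofReal ·), ite_mul]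

theorem thirdA_map_mulVec_one (v : Fin 3 × Fin N → ℂ) (n : Fin N) :
    ((thirdA a₀ a₁ a₂ L).map (Complex.ofReal ·) *ᵥ v) (1, n) = v (2, n) := by
  simp [mulVec, dotProduct, Fintype.sum_prod_type, thirdA, apply_ite (Complex.ofReal ·), ite_mul]

theorem thirdA_map_mulVec_two (v : Fin 3 × Fin N → ℂ) (n : Fin N) :
    ((thirdA a₀ a₁ a₂ L).map (Complex.ofReal ·) *ᵥ v) (2, n) =
      -(a₀ * (L.map (Complex.ofReal ·) *ᵥ fun m ↦ v (0, m)) n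
        + a₁ * (L.map (Complex.ofReal ·) *ᵥ fun m ↦ v (1, m)) n
        + a₂ * (L.map (Complex.ofReal ·) *ᵥ fun m ↦ v (2, m)) n) := by
  simp [mulVec, dotProduct, Fintype.sum_prod_type, Fin.sum_univ_three, thirdA, Finset.mul_sum,
    mul_assoc, add_comm]

theorem thirdA_map_mulVec_powers_smul_eq {s : ℂ} {x : Fin N → ℂ}
    (hx : (a₀ + a₁ * s + a₂ * s ^ 2 : ℂ) • (L.map (Complex.ofReal ·) *ᵥ x) = -s ^ 3 • x) :
    (thirdA a₀ a₁ a₂ L).map (Complex.ofReal ·) *ᵥ (fun p ↦ s ^ (p.1 : ℕ) * x p.2) =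
      s • fun p ↦ s ^ (p.1 : ℕ) * x p.2 := by
  have hLsx (c : ℂ) : (L.map (Complex.ofReal ·) *ᵥ fun m ↦ c * x m) =
      c • (L.map (Complex.ofReal ·) *ᵥ x) := mulVec_smul _ c x
  ext ⟨j, m⟩
  have hxm := congrFun hx m
  simp only [Pi.smul_apply, smul_eq_mul] at hxm
  fin_cases j
  · simp [thirdA_map_mulVec_zero]
  · simp [thirdA_map_mulVec_one, pow_two, mul_assoc]
  · simp only [Fin.reduceFinMk, thirdA_map_mulVec_two, Fin.val_zero, Fin.val_one, Fin.val_two,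
      pow_zero, one_mul, pow_one, hLsx, Pi.smul_apply, smul_eq_mul]
    linear_combination -hxm

theorem mem_spectrum_thirdA_map_iff (s : ℂ) :
    s ∈ spectrum ℂ ((thirdA a₀ a₁ a₂ L).map (Complex.ofReal ·)) ↔
      ∃ x ≠ 0, (a₀ + a₁ * s + a₂ * s ^ 2 : ℂ) • (L.map (Complex.ofReal ·) *ᵥ x) = -s ^ 3 • x := by
  rw [mem_spectrum_iff_exists_mulVec_eq_smul]
  constructor
  · rintro ⟨v, hv, hAv⟩
    have h₁ : (fun m ↦ v (1, m)) = s • fun m ↦ v (0, m) := by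
      ext m; simpa [thirdA_map_mulVec_zero] using congrFun hAv (0, m)
    have h₂ : (fun m ↦ v (2, m)) = s ^ 2 • fun m ↦ v (0, m) := by
      ext m
      have := congrFun hAv (1, m)
      rw [thirdA_map_mulVec_one] at this
      simp [this, congrFun h₁ m, pow_two, mul_assoc]
    refine ⟨fun m ↦ v (0, m), ?_, ?_⟩
    · contrapose! hv
      ext ⟨j, m⟩
      fin_cases j
      · exact congrFun hv m
      · simpa [hv] using congrFun h₁ m
      · simpa [hv] using congrFun h₂ m
    · ext m
      have := congrFun hAv (2, m)
      rw [thirdA_map_mulVec_two, h₁, h₂, mulVec_smul, mulVec_smul] at this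
      simp only [Pi.smul_apply, smul_eq_mul] at this ⊢
      have h₂m : v (2, m) = s ^ 2 * v (0, m) := by simpa using congrFun h₂ m
      linear_combination -this - s * h₂m
  · rintro ⟨x, hx, hLx⟩
    refine ⟨fun p ↦ s ^ (p.1 : ℕ) * x p.2, ?_, thirdA_map_mulVec_powers_smul_eq a₀ a₁ a₂ L hLx⟩
    contrapose! hx
    ext m
    simpa using congrFun hx (0, m)
end

theorem mem_spectrum_thirdA_map_iff_exists_eigenvalues {N : ℕ} {a₀ : ℝ} (a₁ a₂ : ℝ)
    {L : Matrix (Fin N) (Fin N) ℝ} (hL : L.IsHermitian) (ha₀ : a₀ ≠ 0) (s : ℂ) :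
    s ∈ spectrum ℂ ((thirdA a₀ a₁ a₂ L).map (Complex.ofReal ·)) ↔
      ∃ i, s ^ 3 + (a₂ * hL.eigenvalues i : ℝ) * s ^ 2 + (a₁ * hL.eigenvalues i : ℝ) * s
        + (a₀ * hL.eigenvalues i : ℝ) = 0 := by
  rw [mem_spectrum_thirdA_map_iff]
  set w : ℂ := a₀ + a₁ * s + a₂ * s ^ 2 with hw
  have hcubic (μ : ℝ) : s ^ 3 + (a₂ * μ : ℝ) * s ^ 2 + (a₁ * μ : ℝ) * s + (a₀ * μ : ℝ)
      = s ^ 3 + w * μ := by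
    push_cast; ring
  simp only [hcubic]
  by_cases hw0 : w = 0
  · have hs : s ≠ 0 := by
      rintro rfl
      simp [hw, ha₀] at hw0
    simp [hw0, hs]
  · simp_rw [← eq_inv_smul_iff₀ hw0, smul_smul, ← mem_spectrum_iff_exists_mulVec_eq_smul,
      hL.mem_spectrum_map_ofReal_iff, eq_inv_mul_iff_mul_eq₀ hw0]
    refine exists_congr fun i ↦ ⟨fun h ↦ ?_, fun h ↦ ?_⟩ <;> linear_combination h

/-- Third-order consensus: the eigenvalues of A are exactly the roots of the
cubics s³ + a₂λᵢs² + a₁λᵢs + a₀λᵢ over the Laplacian eigenvalues λᵢ; by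
Routh–Hurwitz, for λ > 0 all roots of the cubic have negative real part iff
λ > a₀/(a₁a₂); consequently, asymptotic convergence to consensus (all nonzero
eigenvalues of A in the open left half-plane) requires λ₂ > a₀/(a₁a₂). -/
theorem stmt14 {N : ℕ} (hN : 2 ≤ N) (L : Matrix (Fin N) (Fin N) ℝ)
    (hH : L.IsHermitian)
    (hl2 : 0 < sortedEig hH ⟨1, by omega⟩)
    (a₀ a₁ a₂ : ℝ) (ha₀ : 0 < a₀) (ha₁ : 0 < a₁) (ha₂ : 0 < a₂) :
    (∀ s : ℂ,
      s ∈ spectrum ℂ ((thirdA a₀ a₁ a₂ L).map (Complex.ofReal ·)) ↔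
      ∃ i : Fin N,
        s ^ 3 + (a₂ * hH.eigenvalues i : ℝ) * s ^ 2 +
          (a₁ * hH.eigenvalues i : ℝ) * s + (a₀ * hH.eigenvalues i : ℝ) = 0) ∧
    (∀ lam : ℝ, 0 < lam →
      ((∀ s : ℂ,
          s ^ 3 + (a₂ * lam : ℝ) * s ^ 2 + (a₁ * lam : ℝ) * s + (a₀ * lam : ℝ) = 0 →
          s.re < 0) ↔ a₀ / (a₁ * a₂) < lam)) ∧
    ((∀ s ∈ spectrum ℂ ((thirdA a₀ a₁ a₂ L).map (Complex.ofReal ·)),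
        s ≠ 0 → s.re < 0) →
      a₀ / (a₁ * a₂) < sortedEig hH ⟨1, by omega⟩) := by
  have hspec := mem_spectrum_thirdA_map_iff_exists_eigenvalues a₁ a₂ hH ha₀.ne'
  have hstable (lam : ℝ) (hlam : 0 < lam) := cubic_consensus_roots_re_neg_iff ha₀ ha₁ ha₂ hlam
  refine ⟨hspec, hstable, fun hA ↦ (hstable _ hl2).1 fun s hs ↦ ?_⟩
  refine hA s ((hspec s).2 ⟨_, hs⟩) ?_
  rintro rfl
  have h0 : a₀ * sortedEig hH ⟨1, by omega⟩ = 0 := by simpa using hs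
  exact (mul_pos ha₀ hl2).ne' h0
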